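/- arXiv:math/0101064 — 2 statements merged into one kernel-verified Lean document; each statement's English description precedes it below -/
import Mathlib

section
/- Let H be a weak Hopf algebra with bijective antipode, R = Im(Π^L), and A a left weak H-comodule algebra. Then the map s_A: R → A defined by s_A(Π^L(h)) = ε(1_{<-1>} h) 1_{<0>} is a well-defined unital k-algebra homomorphism, making A an R-ring. -/
open TensorProduct LinearMap MulOpposite

noncomputable section
namespace DK

variable (k : Type*) [CommRing k] (H : Type*) [Ring H] [Algebra k H]

/-- Given `u = Σ xᵢ ⊗ bᵢ ∈ H ⊗ B` and `ε : H → k`, the linear map `g ↦ Σ ε(xᵢ * g) • bᵢ`. -/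
def coPi (B : Type*) [AddCommGroup B] [Module k B] (ε : H →ₗ[k] k) (u : H ⊗[k] B) :
    H →ₗ[k] B :=
  ((TensorProduct.lid k B).toLinearMap
      ∘ₗ LinearMap.rTensor B (ε ∘ₗ LinearMap.mul' k H)
      ∘ₗ (TensorProduct.assoc k H H B).symm.toLinearMap
      ∘ₗ LinearMap.lTensor H (TensorProduct.comm k B H).toLinearMap
      ∘ₗ (TensorProduct.assoc k H B H).toLinearMap)
    ∘ₗ TensorProduct.mk k (H ⊗[k] B) H u

/-- Given `u = Σ bᵢ ⊗ xᵢ ∈ B ⊗ H` and `ε : H → k`, the linear map `g ↦ Σ ε(g * xᵢ) • bᵢ`. -/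
def coPiR (B : Type*) [AddCommGroup B] [Module k B] (ε : H →ₗ[k] k) (u : B ⊗[k] H) :
    H →ₗ[k] B :=
  ((TensorProduct.rid k B).toLinearMap
      ∘ₗ LinearMap.lTensor B (ε ∘ₗ LinearMap.mul' k H ∘ₗ (TensorProduct.comm k H H).toLinearMap)
      ∘ₗ (TensorProduct.assoc k B H H).toLinearMap)
    ∘ₗ TensorProduct.mk k (B ⊗[k] H) H u

variable (Δ : H →ₗ[k] H ⊗[k] H) (ε : H →ₗ[k] k)

/-- `Π^L(g) = ε(1₍₁₎ g) • 1₍₂₎`. -/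
def PiL : H →ₗ[k] H := coPi k H H ε (Δ 1)

/-- `Π^R(g) = ε(g 1₍₂₎) • 1₍₁₎`. -/
def PiR : H →ₗ[k] H := coPiR k H H ε (Δ 1)

/-- the map `h₍₁₎ ε(g h₍₂₎)` as a function of the input of `Δ`, i.e.
`u = Σ aᵢ ⊗ bᵢ ↦ Σ ε(g bᵢ) • aᵢ`. -/
def PiRmap (g : H) : H ⊗[k] H →ₗ[k] H :=
  (TensorProduct.rid k H).toLinearMap ∘ₗ LinearMap.lTensor H (ε ∘ₗ LinearMap.mulLeft k g)

/-- `(a ⊗ b) ↦ ε(x a) * ε(b z)`. -/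
def eps2 (x z : H) : H ⊗[k] H →ₗ[k] k :=
  (TensorProduct.lid k k).toLinearMap
    ∘ₗ TensorProduct.map (ε ∘ₗ LinearMap.mulLeft k x) (ε ∘ₗ LinearMap.mulRight k z)

/-- `(a ⊗ b) ↦ ε(a z) * ε(x b)`. -/
def eps2' (x z : H) : H ⊗[k] H →ₗ[k] k :=
  (TensorProduct.lid k k).toLinearMap
    ∘ₗ TensorProduct.map (ε ∘ₗ LinearMap.mulRight k z) (ε ∘ₗ LinearMap.mulLeft k x)

/-- The weak bialgebra axioms for `(H, ·, Δ, ε)`: `Δ` is a multiplicative coassociative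
counital coproduct, the weak counit axiom
`ε(xyz) = ε(x y₍₁₎) ε(y₍₂₎ z) = ε(x y₍₂₎) ε(y₍₁₎ z)` holds, and the weak unit axiom
`(Δ ⊗ id)Δ(1) = (Δ(1) ⊗ 1)(1 ⊗ Δ(1)) = (1 ⊗ Δ(1))(Δ(1) ⊗ 1)` holds. -/
def IsWeakBialgebra : Prop :=
  (∀ x y : H, Δ (x * y) = Δ x * Δ y) ∧
  (∀ h : H, (TensorProduct.assoc k H H H) ((LinearMap.rTensor H Δ) (Δ h)) =
      (LinearMap.lTensor H Δ) (Δ h)) ∧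
  (∀ h : H, (TensorProduct.lid k H) ((LinearMap.rTensor H ε) (Δ h)) = h) ∧
  (∀ h : H, (TensorProduct.rid k H) ((LinearMap.lTensor H ε) (Δ h)) = h) ∧
  (∀ x y z : H, ε (x * y * z) = eps2 k H ε x z (Δ y)) ∧
  (∀ x y z : H, ε (x * y * z) = eps2' k H ε x z (Δ y)) ∧
  ((LinearMap.lTensor H Δ) (Δ 1) =
      (TensorProduct.assoc k H H H) ((Δ 1) ⊗ₜ[k] (1 : H)) * ((1 : H) ⊗ₜ[k] (Δ 1))) ∧
  ((LinearMap.lTensor H Δ) (Δ 1) =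
      ((1 : H) ⊗ₜ[k] (Δ 1)) * (TensorProduct.assoc k H H H) ((Δ 1) ⊗ₜ[k] (1 : H)))

variable (S : H →ₗ[k] H)

/-- The weak Hopf algebra axioms: `H` is a weak bialgebra with antipode `S` satisfying
`h₍₁₎ S(h₍₂₎) = Π^L(h)`, `S(h₍₁₎) h₍₂₎ = Π^R(h)` and `S(h₍₁₎) h₍₂₎ S(h₍₃₎) = S(h)`. -/
def IsWeakHopf : Prop :=
  IsWeakBialgebra k H Δ ε ∧
  (∀ h : H, LinearMap.mul' k H ((LinearMap.lTensor H S) (Δ h)) = PiL k H Δ ε h) ∧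
  (∀ h : H, LinearMap.mul' k H ((LinearMap.rTensor H S) (Δ h)) = PiR k H Δ ε h) ∧
  (∀ h : H,
    (LinearMap.mul' k H ∘ₗ LinearMap.lTensor H (LinearMap.mul' k H))
        ((TensorProduct.map S (TensorProduct.map LinearMap.id S))
          ((LinearMap.lTensor H Δ) (Δ h))) = S h)

end DK
end
noncomputable section
namespace DK
open TensorProduct LinearMap

variable (k : Type*) [CommRing k] (H : Type*) [Ring H] [Algebra k H]
  (Δ : H →ₗ[k] H ⊗[k] H) (ε : H →ₗ[k] k)
  (A : Type*) [Ring A] [Algebra k A] (ρ : A →ₗ[k] H ⊗[k] A)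

/-- `1₂ ⊗ (1₋₁ ⊗ 1₀) ↦ 1₋₁ 1₂ ⊗ 1₀` (used in the weak unit axiom). -/
def innerW : H ⊗[k] (H ⊗[k] A) →ₗ[k] H ⊗[k] A :=
  LinearMap.rTensor A (LinearMap.mul' k H ∘ₗ (TensorProduct.comm k H H).toLinearMap) ∘ₗ
    (TensorProduct.assoc k H H A).symm.toLinearMap

/-- `(A, ρ)` is a left weak `H`-comodule algebra: a coassociative counital left
`H`-comodule and an algebra with `ρ(a)ρ(b) = ρ(ab)` and
`(H ⊗ ρ)ρ(1) = 1₍₁₎ ⊗ 1₍₋₁₎1₍₂₎ ⊗ 1₍₀₎`. -/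
def IsWeakComoduleAlgebra : Prop :=
  (∀ a : A, (TensorProduct.assoc k H H A) ((LinearMap.rTensor A Δ) (ρ a)) =
      (LinearMap.lTensor H ρ) (ρ a)) ∧
  (∀ a : A, (TensorProduct.lid k A) ((LinearMap.rTensor A ε) (ρ a)) = a) ∧
  (∀ a b : A, ρ (a * b) = ρ a * ρ b) ∧
  ((LinearMap.lTensor H ρ) (ρ 1) =
    (LinearMap.lTensor H (innerW k H A))
      ((TensorProduct.assoc k H H (H ⊗[k] A)) ((Δ 1) ⊗ₜ[k] (ρ 1))))

/-- The source map `s_A : h ↦ ε(1₍₋₁₎ h) 1₍₀₎`, i.e. `s_A(Π^L h) = ε(1₍₋₁₎ h) 1₍₀₎`. -/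
def sAlin : H →ₗ[k] A := coPi k H A ε (ρ 1)

end DK
end

/-! Write `E = ε ⊗ id : H ⊗ A → A` and `P = ρ(1)`, so that `s_A(g) = E(P (g ⊗ 1))`.
Contracting the weak unit axiom `(H ⊗ ρ)ρ(1) = 1₍₁₎ ⊗ 1₍₋₁₎1₍₂₎ ⊗ 1₍₀₎` with `ε(- g)` on the
first leg gives `ρ(s_A g) = P (Π^L g ⊗ 1)`; contracting it with `E` on the last two legs gives
`P = (Π^R ⊗ id) P`. Since `Π^L(H)` and `Π^R(H)` commute (weak unit axiom of `H`), `x ⊗ 1`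
commutes with `P` for `x ∈ R`, so for `x, y ∈ R`
`s_A(x) s_A(y) = E(ρ(s_A x) ρ(s_A y)) = E(P (x ⊗ 1) P (y ⊗ 1)) = E(P² (xy ⊗ 1)) = s_A(xy)`,
using `P² = ρ(1 · 1) = P`.
Well-definedness is `ε(w Π^L g) = ε(w g)`, an instance of the weak counit axiom. -/

namespace DK

variable {k : Type*} [CommRing k] {H : Type*} [Ring H] [Algebra k H] (ε : H →ₗ[k] k)

section coPi

variable {B : Type*} [AddCommGroup B] [Module k B]

def counitLeft : H ⊗[k] B →ₗ[k] B := (TensorProduct.lid k B).toLinearMap ∘ₗ rTensor B ε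

@[simp]
lemma counitLeft_tmul (x : H) (b : B) : counitLeft ε (x ⊗ₜ[k] b) = ε x • b := by
  simp [counitLeft]

lemma counitLeft_lTensor {C : Type*} [AddCommGroup C] [Module k C] (f : B →ₗ[k] C)
    (u : H ⊗[k] B) : counitLeft ε (lTensor H f u) = f (counitLeft ε u) := by
  induction u using TensorProduct.induction_on with
  | zero => simp
  | tmul x b => simp
  | add u v hu hv => simp only [map_add, hu, hv]

@[simp]
lemma coPi_zero : coPi k H B ε 0 = 0 := by
  simp [coPi]

@[simp]
lemma coPi_add (u v : H ⊗[k] B) : coPi k H B ε (u + v) = coPi k H B ε u + coPi k H B ε v := by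
  simp [coPi, comp_add]

@[simp]
lemma coPiR_zero : coPiR k H B ε 0 = 0 := by
  simp [coPiR]

@[simp]
lemma coPiR_add (u v : B ⊗[k] H) :
    coPiR k H B ε (u + v) = coPiR k H B ε u + coPiR k H B ε v := by
  simp [coPiR, comp_add]

lemma coPi_eq_counitLeft (u : H ⊗[k] B) (g : H) :
    coPi k H B ε u g = counitLeft ε (rTensor B (mulRight k g) u) := by
  induction u using TensorProduct.induction_on with
  | zero => simp
  | tmul x b => simp [coPi]
  | add u v hu hv => simp [hu, hv]

@[simp]
lemma coPi_tmul (x : H) (b : B) (g : H) : coPi k H B ε (x ⊗ₜ[k] b) g = ε (x * g) • b := by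
  simp [coPi_eq_counitLeft]

lemma coPi_one (u : H ⊗[k] B) : coPi k H B ε u 1 = counitLeft ε u := by
  rw [coPi_eq_counitLeft]
  congr 1
  simp

lemma coPi_congr_of_forall_eps_mul_eq {g g' : H} (hg : ∀ w, ε (w * g) = ε (w * g'))
    (u : H ⊗[k] B) : coPi k H B ε u g = coPi k H B ε u g' := by
  simp only [coPi_eq_counitLeft]
  induction u using TensorProduct.induction_on with
  | zero => simp
  | tmul x b => simp [hg]
  | add u v hu hv => simp only [map_add, hu, hv]

@[simp]
lemma coPiR_tmul (b : B) (x : H) (g : H) : coPiR k H B ε (b ⊗ₜ[k] x) g = ε (g * x) • b := by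
  simp [coPiR]

end coPi

section WeakBialgebra

lemma eps_mul_coPi (w g : H) (u : H ⊗[k] H) :
    ε (w * coPi k H H ε u g) = eps2' k H ε w g u := by
  induction u using TensorProduct.induction_on with
  | zero => simp
  | tmul x y => simp [eps2', mul_comm]
  | add u v hu hv => simp [mul_add, hu, hv]

def outerCounit (a b : H) : H ⊗[k] (H ⊗[k] H) →ₗ[k] H :=
  counitLeft ε ∘ₗ rTensor H (mulRight k a) ∘ₗ
    lTensor H ((TensorProduct.rid k H).toLinearMap ∘ₗ lTensor H (ε ∘ₗ mulLeft k b))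

@[simp]
lemma outerCounit_tmul (a b x y z : H) :
    outerCounit ε a b (x ⊗ₜ[k] (y ⊗ₜ[k] z)) = (ε (x * a) * ε (b * z)) • y := by
  simp [outerCounit, smul_smul, mul_comm]

lemma outerCounit_assoc_mul (a b : H) (u v : H ⊗[k] H) :
    outerCounit ε a b (TensorProduct.assoc k H H H (u ⊗ₜ[k] 1) * (1 ⊗ₜ[k] v)) =
      coPi k H H ε u a * coPiR k H H ε v b := by
  induction u using TensorProduct.induction_on with
  | zero => simp
  | tmul x y =>
    induction v using TensorProduct.induction_on with
    | zero => simp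
    | tmul x' y' => simp [Algebra.TensorProduct.tmul_mul_tmul, smul_smul, mul_comm]
    | add v v' hv hv' =>
      simp only [tmul_add, map_add, hv, hv', coPiR_add, LinearMap.add_apply, mul_add]
  | add u u' hu hu' =>
    simp only [add_tmul, map_add, hu, hu', coPi_add, LinearMap.add_apply, add_mul]

lemma outerCounit_mul_assoc (a b : H) (u v : H ⊗[k] H) :
    outerCounit ε a b ((1 ⊗ₜ[k] u) * TensorProduct.assoc k H H H (v ⊗ₜ[k] 1)) =
      coPiR k H H ε u b * coPi k H H ε v a := by
  induction u using TensorProduct.induction_on with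
  | zero => simp
  | tmul x y =>
    induction v using TensorProduct.induction_on with
    | zero => simp
    | tmul x' y' => simp [Algebra.TensorProduct.tmul_mul_tmul, smul_smul, mul_comm]
    | add v v' hv hv' =>
      simp only [add_tmul, map_add, hv, hv', coPi_add, LinearMap.add_apply, mul_add]
  | add u u' hu hu' =>
    simp only [tmul_add, map_add, hu, hu', coPiR_add, LinearMap.add_apply, add_mul]

variable (Δ : H →ₗ[k] H ⊗[k] H)

lemma eps_mul_PiL (hε : ∀ x y z : H, ε (x * y * z) = eps2' k H ε x z (Δ y)) (w g : H) :
    ε (w * PiL k H Δ ε g) = ε (w * g) := by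
  rw [PiL, eps_mul_coPi, ← hε, mul_one]

lemma PiL_PiL (hε : ∀ x y z : H, ε (x * y * z) = eps2' k H ε x z (Δ y)) (g : H) :
    PiL k H Δ ε (PiL k H Δ ε g) = PiL k H Δ ε g :=
  coPi_congr_of_forall_eps_mul_eq ε (eps_mul_PiL ε Δ hε · g) _

lemma commute_PiL_PiR
    (hΔ : TensorProduct.assoc k H H H (Δ 1 ⊗ₜ[k] 1) * (1 ⊗ₜ[k] Δ 1) =
      (1 ⊗ₜ[k] Δ 1) * TensorProduct.assoc k H H H (Δ 1 ⊗ₜ[k] 1)) (a b : H) :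
    Commute (PiL k H Δ ε a) (PiR k H Δ ε b) := by
  have := congrArg (outerCounit ε a b) hΔ
  rwa [outerCounit_assoc_mul, outerCounit_mul_assoc] at this

end WeakBialgebra

section ComoduleAlgebra

variable {A : Type*} [Ring A] [Algebra k A]

lemma coPi_lTensor {B C : Type*} [AddCommGroup B] [Module k B] [AddCommGroup C] [Module k C]
    (f : B →ₗ[k] C) (u : H ⊗[k] B) (g : H) :
    coPi k H C ε (lTensor H f u) g = f (coPi k H B ε u g) := by
  rw [coPi_eq_counitLeft, coPi_eq_counitLeft, ← counitLeft_lTensor,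
    ← comp_apply (rTensor C _), rTensor_comp_lTensor, ← lTensor_comp_rTensor, comp_apply]

lemma rTensor_mulRight_eq_mul_tmul_one (g : H) (u : H ⊗[k] A) :
    rTensor A (mulRight k g) u = u * (g ⊗ₜ[k] (1 : A)) := by
  induction u using TensorProduct.induction_on with
  | zero => simp
  | tmul x a => simp [Algebra.TensorProduct.tmul_mul_tmul]
  | add u v hu hv => simp only [map_add, add_mul, hu, hv]

lemma coPi_innerW (u : H ⊗[k] H) (v : H ⊗[k] A) (g : H) :
    coPi k H (H ⊗[k] A) ε
        (lTensor H (innerW k H A) (TensorProduct.assoc k H H _ (u ⊗ₜ[k] v))) g =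
      v * (coPi k H H ε u g ⊗ₜ[k] (1 : A)) := by
  induction u using TensorProduct.induction_on with
  | zero => simp
  | tmul x y =>
    induction v using TensorProduct.induction_on with
    | zero => simp
    | tmul x' a => simp [innerW, Algebra.TensorProduct.tmul_mul_tmul, smul_tmul']
    | add v v' hv hv' =>
      simp only [tmul_add, map_add, coPi_add, LinearMap.add_apply, hv, hv', add_mul]
  | add u u' hu hu' =>
    simp only [add_tmul, map_add, coPi_add, LinearMap.add_apply, hu, hu', mul_add]

lemma lTensor_counitLeft_innerW (u : H ⊗[k] H) (v : H ⊗[k] A) :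
    lTensor H (counitLeft ε)
        (lTensor H (innerW k H A) (TensorProduct.assoc k H H _ (u ⊗ₜ[k] v))) =
      rTensor A (coPiR k H H ε u) v := by
  induction u using TensorProduct.induction_on with
  | zero => simp
  | tmul x y =>
    induction v using TensorProduct.induction_on with
    | zero => simp
    | tmul x' a => simp [innerW, smul_tmul']
    | add v v' hv hv' => simp only [tmul_add, map_add, hv, hv']
  | add u u' hu hu' =>
    simp only [add_tmul, map_add, coPiR_add, rTensor_add, LinearMap.add_apply, hu, hu']

variable (Δ : H →ₗ[k] H ⊗[k] H) (ρ : A →ₗ[k] H ⊗[k] A)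

lemma sAlin_eq_counitLeft (g : H) :
    sAlin k H ε A ρ g = counitLeft ε (ρ 1 * (g ⊗ₜ[k] (1 : A))) := by
  rw [sAlin, coPi_eq_counitLeft, rTensor_mulRight_eq_mul_tmul_one]

lemma rho_sAlin (hA : IsWeakComoduleAlgebra k H Δ ε A ρ) (g : H) :
    ρ (sAlin k H ε A ρ g) = ρ 1 * (PiL k H Δ ε g ⊗ₜ[k] (1 : A)) := by
  have := congrArg (coPi k H (H ⊗[k] A) ε · g) hA.2.2.2
  rwa [coPi_innerW, coPi_lTensor] at this

lemma rTensor_PiR_rho_one (hA : IsWeakComoduleAlgebra k H Δ ε A ρ) :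
    rTensor A (PiR k H Δ ε) (ρ 1) = ρ 1 := by
  have hcounit : counitLeft ε ∘ₗ ρ = LinearMap.id := LinearMap.ext hA.2.1
  have := congrArg (lTensor H (counitLeft ε)) hA.2.2.2
  rwa [← lTensor_comp_apply, hcounit, lTensor_id, LinearMap.id_apply, lTensor_counitLeft_innerW,
    eq_comm] at this

lemma commute_PiL_tmul_one_rTensor_PiR
    (hcomm : ∀ a b, Commute (PiL k H Δ ε a) (PiR k H Δ ε b)) (g : H) (v : H ⊗[k] A) :
    Commute (PiL k H Δ ε g ⊗ₜ[k] (1 : A)) (rTensor A (PiR k H Δ ε) v) := by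
  induction v using TensorProduct.induction_on with
  | zero => simp
  | tmul x a =>
    simp [Commute, SemiconjBy, Algebra.TensorProduct.tmul_mul_tmul, (hcomm g x).eq]
  | add v v' hv hv' => rw [map_add]; exact hv.add_right hv'

lemma sAlin_PiL (hε : ∀ x y z : H, ε (x * y * z) = eps2' k H ε x z (Δ y)) (g : H) :
    sAlin k H ε A ρ (PiL k H Δ ε g) = sAlin k H ε A ρ g :=
  coPi_congr_of_forall_eps_mul_eq ε (eps_mul_PiL ε Δ hε · g) _

lemma sAlin_one (hA : IsWeakComoduleAlgebra k H Δ ε A ρ) : sAlin k H ε A ρ 1 = 1 := by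
  rw [sAlin, coPi_one]
  exact hA.2.1 1

lemma sAlin_PiL_mul_PiL (hH : IsWeakBialgebra k H Δ ε) (hA : IsWeakComoduleAlgebra k H Δ ε A ρ)
    (g g' : H) :
    sAlin k H ε A ρ (PiL k H Δ ε g * PiL k H Δ ε g') =
      sAlin k H ε A ρ (PiL k H Δ ε g) * sAlin k H ε A ρ (PiL k H Δ ε g') := by
  obtain ⟨-, -, -, -, -, hε, hΔ₁, hΔ₂⟩ := hH
  have hcounit := hA.2.1
  have hmul := hA.2.2.1
  set x := PiL k H Δ ε g
  set y := PiL k H Δ ε g'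
  set P := ρ 1
  have hρ (h : H) :
      ρ (sAlin k H ε A ρ (PiL k H Δ ε h)) = P * (PiL k H Δ ε h ⊗ₜ[k] (1 : A)) := by
    rw [rho_sAlin ε Δ ρ hA, PiL_PiL ε Δ hε]
  have hPP : P * P = P := by rw [← hmul, one_mul]
  have hLR := commute_PiL_PiR ε Δ (hΔ₁.symm.trans hΔ₂)
  have hxP : Commute (x ⊗ₜ[k] (1 : A)) P := by
    have := commute_PiL_tmul_one_rTensor_PiR ε Δ hLR g P
    rwa [rTensor_PiR_rho_one ε Δ ρ hA] at this
  calc sAlin k H ε A ρ (x * y)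
      = counitLeft ε (P * P * ((x ⊗ₜ[k] (1 : A)) * (y ⊗ₜ[k] (1 : A)))) := by
        rw [hPP, Algebra.TensorProduct.tmul_mul_tmul, one_mul, sAlin_eq_counitLeft]
    _ = counitLeft ε (P * (x ⊗ₜ[k] (1 : A)) * (P * (y ⊗ₜ[k] (1 : A)))) := by
        rw [mul_assoc P (x ⊗ₜ[k] (1 : A)), hxP.left_comm, ← mul_assoc P P]
    _ = sAlin k H ε A ρ x * sAlin k H ε A ρ y := by
        rw [← hρ, ← hρ, ← hmul]
        exact hcounit _

end ComoduleAlgebra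

end DK

theorem stmt11_general (k : Type*) [CommRing k] (H : Type*) [Ring H] [Algebra k H]
    (Δ : H →ₗ[k] H ⊗[k] H) (ε : H →ₗ[k] k) (S : H →ₗ[k] H)
    (A : Type*) [Ring A] [Algebra k A] (ρ : A →ₗ[k] H ⊗[k] A)
    (hwh : DK.IsWeakHopf k H Δ ε S)
    (hA : DK.IsWeakComoduleAlgebra k H Δ ε A ρ) :
    (∀ g h : H, DK.PiL k H Δ ε g = DK.PiL k H Δ ε h →
      DK.sAlin k H ε A ρ g = DK.sAlin k H ε A ρ h) ∧
    (DK.sAlin k H ε A ρ (1 : H) = 1) ∧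
    (∀ x y : H, x ∈ Set.range (DK.PiL k H Δ ε) → y ∈ Set.range (DK.PiL k H Δ ε) →
      DK.sAlin k H ε A ρ (x * y) = DK.sAlin k H ε A ρ x * DK.sAlin k H ε A ρ y) := by
  obtain ⟨hH, -⟩ := hwh
  refine ⟨fun g h hgh => ?_, DK.sAlin_one ε Δ ρ hA, ?_⟩
  · have hε := hH.2.2.2.2.2.1
    rw [← DK.sAlin_PiL ε Δ ρ hε g, hgh, DK.sAlin_PiL ε Δ ρ hε h]
  · rintro _ _ ⟨g, rfl⟩ ⟨g', rfl⟩
    exact DK.sAlin_PiL_mul_PiL ε Δ ρ hH hA g g'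

/-- Let `H` be a weak Hopf algebra with bijective antipode, `R = Im Π^L`, and
`A` a left weak `H`-comodule algebra.  Then `s_A : R → A`, `s_A(Π^L h) = ε(1₍₋₁₎ h) 1₍₀₎`,
is a well-defined unital `k`-algebra homomorphism, making `A` an `R`-ring.
(`s_A` is realised as the `k`-linear map `sAlin : H → A`; well-definedness says that
`sAlin` only depends on `Π^L h`, and the algebra map property is multiplicativity on
`R = Im Π^L` together with unitality.) -/
theorem stmt11 (k : Type*) [CommRing k] (H : Type*) [Ring H] [Algebra k H]
    (Δ : H →ₗ[k] H ⊗[k] H) (ε : H →ₗ[k] k) (S Sinv : H →ₗ[k] H)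
    (A : Type*) [Ring A] [Algebra k A] (ρ : A →ₗ[k] H ⊗[k] A)
    (hwh : DK.IsWeakHopf k H Δ ε S)
    (hinv1 : ∀ h, Sinv (S h) = h) (hinv2 : ∀ h, S (Sinv h) = h)
    (hA : DK.IsWeakComoduleAlgebra k H Δ ε A ρ) :
    (∀ g h : H, DK.PiL k H Δ ε g = DK.PiL k H Δ ε h →
      DK.sAlin k H ε A ρ g = DK.sAlin k H ε A ρ h) ∧
    (DK.sAlin k H ε A ρ (1 : H) = 1) ∧
    (∀ x y : H, x ∈ Set.range (DK.PiL k H Δ ε) → y ∈ Set.range (DK.PiL k H Δ ε) →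
      DK.sAlin k H ε A ρ (x * y) = DK.sAlin k H ε A ρ x * DK.sAlin k H ε A ρ y) :=
  stmt11_general k H Δ ε S A ρ hwh hA
end

section
/- Let H be a weak Hopf algebra with bijective antipode, R = Im(Π^L), and A a left weak H-comodule algebra with the R-ring structure s_A(Π^L(h)) = ε(1_{<-1>} h) 1_{<0>}. Then for all g ∈ H and a ∈ A: a_{<-1>} S^{-1}(Π^L(g)) ⊗ a_{<0>} = a_{<-1>} ⊗ a_{<0>} s_A(Π^L(g)). Consequently the induced coaction A → H ⊗_R A has image contained in the Takeuchi product H ×_R A. -/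
open TensorProduct LinearMap MulOpposite

/-!
The key identity is `S⁻¹(Π^L g) = Π̄^R g` with `Π̄^R g = 1₍₁₎ ε(1₍₂₎ g)`. In the convolution
algebra of `H`, `S ∘ Π̄^R ⋆ id = id` and `S ⋆ Π^L = S`, so
`Π^L = id ⋆ S = (S ∘ Π̄^R ⋆ id) ⋆ S = S ∘ Π̄^R ⋆ Π^L`, and the weak unit axiom evaluates the
right-hand side at `g` to `(S ⋆ Π^L)(Π̄^R g) = S(Π̄^R g)`.

By the weak counit axiom `ε(x g) = ε(x Π̄^R g) = ε(x Π^L g)`, whence `h₍₁₎ ε(h₍₂₎ g) = h Π̄^R g`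
and `ε(b₍₋₁₎ g) b₍₀₎ = b s_A(g)`. Coassociativity of the coaction then gives
`a₍₋₁₎ Π̄^R g ⊗ a₍₀₎ = a₍₋₁₎₍₁₎ ε(a₍₋₁₎₍₂₎ g) ⊗ a₍₀₎ = a₍₋₁₎ ⊗ ε(a₍₀₎₍₋₁₎ g) a₍₀₎₍₀₎
= a₍₋₁₎ ⊗ a₍₀₎ s_A(g)`.
-/

namespace DK

section Slice

variable {k M N P : Type*} [CommRing k] [AddCommGroup M] [Module k M] [AddCommGroup N]
  [Module k N] [AddCommGroup P] [Module k P]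

def sliceFst (φ : M →ₗ[k] k) : M ⊗[k] N →ₗ[k] N :=
  (TensorProduct.lid k N).toLinearMap ∘ₗ rTensor N φ

def sliceSnd (φ : N →ₗ[k] k) : M ⊗[k] N →ₗ[k] M :=
  (TensorProduct.rid k M).toLinearMap ∘ₗ lTensor M φ

@[simp]
theorem sliceFst_tmul (φ : M →ₗ[k] k) (m : M) (n : N) : sliceFst φ (m ⊗ₜ[k] n) = φ m • n := by
  simp [sliceFst]

@[simp]
theorem sliceSnd_tmul (φ : N →ₗ[k] k) (m : M) (n : N) : sliceSnd φ (m ⊗ₜ[k] n) = φ n • m := by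
  simp [sliceSnd]

theorem sliceFst_lTensor (φ : M →ₗ[k] k) (f : N →ₗ[k] P) (u : M ⊗[k] N) :
    sliceFst φ (lTensor M f u) = f (sliceFst φ u) := by
  induction u using TensorProduct.induction_on <;> simp_all

theorem sliceSnd_rTensor (φ : N →ₗ[k] k) (f : M →ₗ[k] P) (u : M ⊗[k] N) :
    sliceSnd φ (rTensor N f u) = f (sliceSnd φ u) := by
  induction u using TensorProduct.induction_on <;> simp_all

theorem lTensor_sliceFst_assoc (φ : N →ₗ[k] k) (w : (M ⊗[k] N) ⊗[k] P) :
    lTensor M (sliceFst φ) (TensorProduct.assoc k M N P w) = rTensor P (sliceSnd φ) w := by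
  induction w using TensorProduct.induction_on with
  | zero => simp
  | add w₁ w₂ h₁ h₂ => simp_all
  | tmul u p => induction u using TensorProduct.induction_on <;> simp_all [add_tmul, smul_tmul']

end Slice

section AlgebraSlice

variable {k A B C : Type*} [CommRing k] [Ring A] [Algebra k A] [Ring B] [Algebra k B]
  [Ring C] [Algebra k C]

theorem sliceFst_mul_tmul_one (φ : A →ₗ[k] k) (t : A ⊗[k] B) (x : A) :
    sliceFst φ (t * (x ⊗ₜ[k] 1)) = sliceFst (φ ∘ₗ mulRight k x) t := by
  induction t using TensorProduct.induction_on <;> simp_all [add_mul]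

theorem sliceSnd_mul_one_tmul (φ : B →ₗ[k] k) (t : A ⊗[k] B) (x : B) :
    sliceSnd φ (t * (1 ⊗ₜ[k] x)) = sliceSnd (φ ∘ₗ mulRight k x) t := by
  induction t using TensorProduct.induction_on <;> simp_all [add_mul]

theorem lTensor_sliceFst_mulLeft_eq (ε : B →ₗ[k] k) (u : A ⊗[k] B) (v : B ⊗[k] C) :
    lTensor A (sliceFst ε ∘ₗ mulLeft k v ∘ₗ (mk k B C).flip 1) u =
      rTensor C (sliceSnd ε ∘ₗ mulRight k u ∘ₗ mk k A B 1) v := by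
  induction u using TensorProduct.induction_on with
  | zero => induction v using TensorProduct.induction_on <;> simp_all
  | add u₁ u₂ h₁ h₂ =>
    rw [map_add, h₁, h₂]
    clear h₁ h₂
    induction v using TensorProduct.induction_on with
    | zero => simp
    | add v₁ v₂ h₁ h₂ => simp only [map_add, ← h₁, ← h₂]; abel
    | tmul c d => simp [mul_add, add_tmul]
  | tmul a b =>
    induction v using TensorProduct.induction_on <;> simp_all [add_mul, tmul_add, smul_tmul']

theorem lTensor_sliceFst_mulRight_eq (ε : B →ₗ[k] k) (u : A ⊗[k] B) (v : B ⊗[k] C) :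
    lTensor A (sliceFst ε ∘ₗ mulRight k v ∘ₗ (mk k B C).flip 1) u =
      rTensor C (sliceSnd ε ∘ₗ mulLeft k u ∘ₗ mk k A B 1) v := by
  induction u using TensorProduct.induction_on with
  | zero => induction v using TensorProduct.induction_on <;> simp_all
  | add u₁ u₂ h₁ h₂ =>
    rw [map_add, h₁, h₂]
    clear h₁ h₂
    induction v using TensorProduct.induction_on with
    | zero => simp
    | add v₁ v₂ h₁ h₂ => simp only [map_add, ← h₁, ← h₂]; abel
    | tmul c d => simp [add_mul, add_tmul]
  | tmul a b =>
    induction v using TensorProduct.induction_on <;> simp_all [mul_add, tmul_add, smul_tmul']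

theorem mul'_rTensor_lTensor_mulRight (f : A →ₗ[k] A) (x : A) (u : A ⊗[k] A) :
    mul' k A (rTensor A f (lTensor A (mulRight k x) u)) = mul' k A (rTensor A f u) * x := by
  induction u using TensorProduct.induction_on <;> simp_all [add_mul, mul_assoc]

theorem assoc_tmul_one_mul_one_tmul (u : A ⊗[k] B) (v : B ⊗[k] C) :
    TensorProduct.assoc k A B C (u ⊗ₜ[k] 1) * (1 ⊗ₜ[k] v) =
      TensorProduct.assoc k A B C (rTensor C (mulLeft k u ∘ₗ mk k A B 1) v) := by
  induction v using TensorProduct.induction_on with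
  | zero => simp
  | add v₁ v₂ h₁ h₂ => simp only [tmul_add, mul_add, map_add, h₁, h₂]
  | tmul c d => induction u using TensorProduct.induction_on <;> simp_all [add_tmul, add_mul]

theorem one_tmul_mul_assoc_tmul_one (u : A ⊗[k] B) (v : B ⊗[k] C) :
    (1 ⊗ₜ[k] v) * TensorProduct.assoc k A B C (u ⊗ₜ[k] 1) =
      TensorProduct.assoc k A B C (rTensor C (mulRight k u ∘ₗ mk k A B 1) v) := by
  induction v using TensorProduct.induction_on with
  | zero => simp
  | add v₁ v₂ h₁ h₂ => simp only [tmul_add, add_mul, map_add, h₁, h₂]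
  | tmul c d => induction u using TensorProduct.induction_on <;> simp_all [add_tmul, mul_add]

theorem assoc_tmul_one_mul_one_tmul_eq_lTensor (u : A ⊗[k] B) (v : B ⊗[k] C) :
    TensorProduct.assoc k A B C (u ⊗ₜ[k] 1) * (1 ⊗ₜ[k] v) =
      lTensor A (mulRight k v ∘ₗ (mk k B C).flip 1) u := by
  induction u using TensorProduct.induction_on <;> simp_all [add_tmul, add_mul]

end AlgebraSlice

section WeakBialgebra

variable {k H : Type*} [CommRing k] [Ring H] [Algebra k H] {Δ : H →ₗ[k] H ⊗[k] H}
  {ε : H →ₗ[k] k}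

theorem coPi_apply {B : Type*} [AddCommGroup B] [Module k B] (u : H ⊗[k] B) (g : H) :
    coPi k H B ε u g = sliceFst (ε ∘ₗ mulRight k g) u := by
  induction u using TensorProduct.induction_on <;> simp_all [coPi]

theorem coPiR_apply {B : Type*} [AddCommGroup B] [Module k B] (u : B ⊗[k] H) (g : H) :
    coPiR k H B ε u g = sliceSnd (ε ∘ₗ mulLeft k g) u := by
  induction u using TensorProduct.induction_on <;> simp_all [coPiR]

theorem coPi_eq_sliceFst {B : Type*} [Ring B] [Algebra k B] (t : H ⊗[k] B) :
    coPi k H B ε t = sliceFst ε ∘ₗ mulLeft k t ∘ₗ (mk k H B).flip 1 := by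
  ext g
  simp [coPi_apply, sliceFst_mul_tmul_one]

theorem eps2_apply (x z : H) (u : H ⊗[k] H) :
    eps2 k H ε x z u = ε (x * sliceSnd (ε ∘ₗ mulRight k z) u) := by
  induction u using TensorProduct.induction_on <;> simp_all [eps2, mul_add, mul_comm]

theorem eps2'_apply (x z : H) (u : H ⊗[k] H) :
    eps2' k H ε x z u = ε (x * sliceFst (ε ∘ₗ mulRight k z) u) := by
  induction u using TensorProduct.induction_on <;> simp_all [eps2', mul_add, mul_comm]

variable (Δ) in
def conv (f g : H →ₗ[k] H) : H →ₗ[k] H :=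
  mul' k H ∘ₗ map f g ∘ₗ Δ

theorem conv_assoc
    (hco : ∀ h, TensorProduct.assoc k H H H (rTensor H Δ (Δ h)) = lTensor H Δ (Δ h))
    (f g h : H →ₗ[k] H) : conv Δ (conv Δ f g) h = conv Δ f (conv Δ g h) := by
  have hmul : mul' k H ∘ₗ map (mul' k H ∘ₗ map f g) h =
      mul' k H ∘ₗ map f (mul' k H ∘ₗ map g h) ∘ₗ (TensorProduct.assoc k H H H).toLinearMap := by
    ext
    simp [mul_assoc]
  ext x
  have := congr($hmul (rTensor H Δ (Δ x)))
  simp only [comp_apply, LinearEquiv.coe_coe, hco] at this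
  simpa only [conv, ← map_comp_rTensor, ← map_comp_lTensor, comp_assoc, comp_apply,
    rTensor_comp_apply, lTensor_comp_apply] using this

variable (Δ ε) in
/-- `Π̄^R(g) = 1₍₁₎ ε(1₍₂₎ g)`. -/
def PiRbar : H →ₗ[k] H :=
  sliceSnd ε ∘ₗ mulLeft k (Δ 1) ∘ₗ mk k H H 1

theorem PiRbar_apply (g : H) : PiRbar Δ ε g = sliceSnd (ε ∘ₗ mulRight k g) (Δ 1) := by
  simp [PiRbar, sliceSnd_mul_one_tmul]

namespace IsWeakBialgebra

theorem comul_mul (hB : IsWeakBialgebra k H Δ ε) (x y : H) : Δ (x * y) = Δ x * Δ y :=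
  hB.1 x y

theorem coassoc (hB : IsWeakBialgebra k H Δ ε) (h : H) :
    TensorProduct.assoc k H H H (rTensor H Δ (Δ h)) = lTensor H Δ (Δ h) :=
  hB.2.1 h

theorem sliceFst_comul (hB : IsWeakBialgebra k H Δ ε) (h : H) : sliceFst ε (Δ h) = h :=
  hB.2.2.1 h

theorem sliceSnd_comul (hB : IsWeakBialgebra k H Δ ε) (h : H) : sliceSnd ε (Δ h) = h :=
  hB.2.2.2.1 h

theorem counit_comp_mulRight_PiRbar (hB : IsWeakBialgebra k H Δ ε) (g : H) :
    ε ∘ₗ mulRight k (PiRbar Δ ε g) = ε ∘ₗ mulRight k g := by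
  ext x
  have h : ε (x * 1 * g) = eps2 k H ε x g (Δ 1) := hB.2.2.2.2.1 x 1 g
  rw [mul_one] at h
  simp [h, eps2_apply, PiRbar_apply]

theorem counit_comp_mulRight_PiL (hB : IsWeakBialgebra k H Δ ε) (g : H) :
    ε ∘ₗ mulRight k (PiL k H Δ ε g) = ε ∘ₗ mulRight k g := by
  ext x
  have h : ε (x * 1 * g) = eps2' k H ε x g (Δ 1) := hB.2.2.2.2.2.1 x 1 g
  rw [mul_one] at h
  simp [h, eps2'_apply, PiL, coPi_apply]

theorem PiR_one (hB : IsWeakBialgebra k H Δ ε) : PiR k H Δ ε 1 = 1 := by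
  simp [PiR, coPiR_apply, hB.sliceSnd_comul]

theorem rTensor_comul_comul_one_eq_mulLeft (hB : IsWeakBialgebra k H Δ ε) :
    rTensor H Δ (Δ 1) = rTensor H (mulLeft k (Δ 1) ∘ₗ mk k H H 1) (Δ 1) := by
  apply (TensorProduct.assoc k H H H).injective
  rw [hB.coassoc, hB.2.2.2.2.2.2.1, assoc_tmul_one_mul_one_tmul]

theorem rTensor_comul_comul_one_eq_mulRight (hB : IsWeakBialgebra k H Δ ε) :
    rTensor H Δ (Δ 1) = rTensor H (mulRight k (Δ 1) ∘ₗ mk k H H 1) (Δ 1) := by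
  apply (TensorProduct.assoc k H H H).injective
  rw [hB.coassoc, hB.2.2.2.2.2.2.2, one_tmul_mul_assoc_tmul_one]

theorem lTensor_comul_comul_one (hB : IsWeakBialgebra k H Δ ε) :
    lTensor H Δ (Δ 1) = lTensor H (mulRight k (Δ 1) ∘ₗ (mk k H H).flip 1) (Δ 1) := by
  rw [hB.2.2.2.2.2.2.1, assoc_tmul_one_mul_one_tmul_eq_lTensor]

/- The three identities below and `IsWeakComoduleAlgebra.lTensor_sliceFst_mulLeft_coaction` come
from slicing the weak unit axiom and absorbing the `Δ(1)` it produces into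
`Δ(h) = Δ(h) Δ(1) = Δ(1) Δ(h)` (resp. `ρ(b) = ρ(b) ρ(1)`). -/

-- `h₍₁₎ ε(h₍₂₎ 1₍₁₎) ⊗ 1₍₂₎ = h 1₍₁₎ ⊗ 1₍₂₎`
theorem rTensor_sliceSnd_mulLeft_comul (hB : IsWeakBialgebra k H Δ ε) (h : H) :
    rTensor H (sliceSnd ε ∘ₗ mulLeft k (Δ h) ∘ₗ mk k H H 1) (Δ 1) =
      rTensor H (mulLeft k h) (Δ 1) := by
  have hcounit : sliceSnd ε ∘ₗ mulLeft k (Δ h) ∘ₗ Δ = mulLeft k h := by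
    ext x
    simp [← hB.comul_mul, hB.sliceSnd_comul]
  have hunit : mulLeft k (Δ h) ∘ₗ mulLeft k (Δ 1) = mulLeft k (Δ h) := by
    rw [← mulLeft_mul, ← hB.comul_mul, mul_one]
  calc rTensor H (sliceSnd ε ∘ₗ mulLeft k (Δ h) ∘ₗ mk k H H 1) (Δ 1)
      = rTensor H (sliceSnd ε ∘ₗ mulLeft k (Δ h)) (rTensor H Δ (Δ 1)) := by
        rw [hB.rTensor_comul_comul_one_eq_mulLeft, ← rTensor_comp_apply, comp_assoc,
          ← comp_assoc _ (mulLeft k (Δ 1)), hunit]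
    _ = rTensor H (mulLeft k h) (Δ 1) := by rw [← rTensor_comp_apply, comp_assoc, hcounit]

-- `h₍₁₎ ε(1₍₁₎ h₍₂₎) ⊗ 1₍₂₎ = 1₍₁₎ h ⊗ 1₍₂₎`
theorem rTensor_sliceSnd_mulRight_comul (hB : IsWeakBialgebra k H Δ ε) (h : H) :
    rTensor H (sliceSnd ε ∘ₗ mulRight k (Δ h) ∘ₗ mk k H H 1) (Δ 1) =
      rTensor H (mulRight k h) (Δ 1) := by
  have hcounit : sliceSnd ε ∘ₗ mulRight k (Δ h) ∘ₗ Δ = mulRight k h := by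
    ext x
    simp [← hB.comul_mul, hB.sliceSnd_comul]
  have hunit : mulRight k (Δ h) ∘ₗ mulRight k (Δ 1) = mulRight k (Δ h) := by
    rw [← mulRight_mul, ← hB.comul_mul, one_mul]
  calc rTensor H (sliceSnd ε ∘ₗ mulRight k (Δ h) ∘ₗ mk k H H 1) (Δ 1)
      = rTensor H (sliceSnd ε ∘ₗ mulRight k (Δ h)) (rTensor H Δ (Δ 1)) := by
        rw [hB.rTensor_comul_comul_one_eq_mulRight, ← rTensor_comp_apply, comp_assoc,
          ← comp_assoc _ (mulRight k (Δ 1)), hunit]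
    _ = rTensor H (mulRight k h) (Δ 1) := by rw [← rTensor_comp_apply, comp_assoc, hcounit]

-- `1₍₁₎ ⊗ ε(1₍₂₎ h₍₁₎) h₍₂₎ = 1₍₁₎ ⊗ 1₍₂₎ h`
theorem lTensor_sliceFst_mulRight_comul (hB : IsWeakBialgebra k H Δ ε) (h : H) :
    lTensor H (sliceFst ε ∘ₗ mulRight k (Δ h) ∘ₗ (mk k H H).flip 1) (Δ 1) =
      lTensor H (mulRight k h) (Δ 1) := by
  have hcounit : sliceFst ε ∘ₗ mulRight k (Δ h) ∘ₗ Δ = mulRight k h := by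
    ext x
    simp [← hB.comul_mul, hB.sliceFst_comul]
  have hunit : mulRight k (Δ h) ∘ₗ mulRight k (Δ 1) = mulRight k (Δ h) := by
    rw [← mulRight_mul, ← hB.comul_mul, one_mul]
  calc lTensor H (sliceFst ε ∘ₗ mulRight k (Δ h) ∘ₗ (mk k H H).flip 1) (Δ 1)
      = lTensor H (sliceFst ε ∘ₗ mulRight k (Δ h)) (lTensor H Δ (Δ 1)) := by
        rw [hB.lTensor_comul_comul_one, ← lTensor_comp_apply, comp_assoc,
          ← comp_assoc _ (mulRight k (Δ 1)), hunit]
    _ = lTensor H (mulRight k h) (Δ 1) := by rw [← lTensor_comp_apply, comp_assoc, hcounit]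

theorem sliceSnd_comp_comul (hB : IsWeakBialgebra k H Δ ε) (g : H) :
    sliceSnd (ε ∘ₗ mulRight k g) ∘ₗ Δ = mulRight k (PiRbar Δ ε g) := by
  ext h
  calc sliceSnd (ε ∘ₗ mulRight k g) (Δ h)
      = sliceSnd (ε ∘ₗ mulRight k (PiRbar Δ ε g)) (Δ h) := by
        rw [hB.counit_comp_mulRight_PiRbar]
    _ = (sliceSnd ε ∘ₗ mulLeft k (Δ h) ∘ₗ mk k H H 1) (sliceSnd (ε ∘ₗ mulRight k g) (Δ 1)) := by
        simp [sliceSnd_mul_one_tmul, PiRbar_apply]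
    _ = sliceSnd (ε ∘ₗ mulRight k g) (rTensor H (mulLeft k h) (Δ 1)) := by
        rw [← sliceSnd_rTensor, hB.rTensor_sliceSnd_mulLeft_comul]
    _ = h * PiRbar Δ ε g := by
        rw [sliceSnd_rTensor, PiRbar_apply]
        rfl

theorem rTensor_PiRbar_comp_mulRight (hB : IsWeakBialgebra k H Δ ε) (g : H) :
    rTensor H (PiRbar Δ ε ∘ₗ mulRight k g) (Δ 1) =
      rTensor H (mulRight k (PiRbar Δ ε g)) (Δ 1) := by
  have hslice : sliceSnd (ε ∘ₗ mulRight k g) ∘ₗ mulLeft k (Δ 1) ∘ₗ mk k H H 1 =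
      PiRbar Δ ε ∘ₗ mulRight k g := by
    ext x
    simp [sliceSnd_mul_one_tmul, PiRbar_apply, comp_assoc, ← mulRight_mul]
  rw [← hslice, ← hB.sliceSnd_comp_comul, rTensor_comp_apply _ _ Δ,
    hB.rTensor_comul_comul_one_eq_mulLeft, ← rTensor_comp_apply]

theorem conv_PiL_apply (hB : IsWeakBialgebra k H Δ ε) (F : H →ₗ[k] H) (g : H) :
    conv Δ F (PiL k H Δ ε) g = mul' k H (rTensor H F (rTensor H (mulRight k g) (Δ 1))) := by
  rw [conv, comp_apply, comp_apply, ← rTensor_comp_lTensor, comp_apply, PiL, coPi_eq_sliceFst,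
    lTensor_sliceFst_mulLeft_eq, hB.rTensor_sliceSnd_mulRight_comul]

end IsWeakBialgebra

namespace IsWeakHopf

variable {S : H →ₗ[k] H}

theorem toIsWeakBialgebra (hH : IsWeakHopf k H Δ ε S) : IsWeakBialgebra k H Δ ε :=
  hH.1

theorem conv_id_antipode (hH : IsWeakHopf k H Δ ε S) : conv Δ LinearMap.id S = PiL k H Δ ε := by
  ext h
  exact hH.2.1 h

theorem conv_antipode_id (hH : IsWeakHopf k H Δ ε S) : conv Δ S LinearMap.id = PiR k H Δ ε := by
  ext h
  exact hH.2.2.1 h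

theorem conv_antipode_PiL (hH : IsWeakHopf k H Δ ε S) : conv Δ S (PiL k H Δ ε) = S := by
  ext h
  rw [← hH.conv_id_antipode, ← hH.2.2.2 h]
  simp only [conv]
  rw [comp_apply, comp_apply, ← lTensor_comp_map, ← map_comp_lTensor]
  rfl

theorem conv_antipode_PiRbar_id (hH : IsWeakHopf k H Δ ε S) :
    conv Δ (S ∘ₗ PiRbar Δ ε) LinearMap.id = LinearMap.id := by
  have hB := hH.toIsWeakBialgebra
  ext h
  calc conv Δ (S ∘ₗ PiRbar Δ ε) LinearMap.id h
      = mul' k H (rTensor H S (rTensor H (PiRbar Δ ε) (Δ h))) := by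
        rw [← rTensor_comp_apply]
        rfl
    _ = mul' k H (rTensor H S (lTensor H (mulRight k h) (Δ 1))) := by
        rw [PiRbar, ← lTensor_sliceFst_mulRight_eq, hB.lTensor_sliceFst_mulRight_comul]
    _ = PiR k H Δ ε 1 * h := by
        rw [mul'_rTensor_lTensor_mulRight, ← hH.conv_antipode_id]
        rfl
    _ = h := by rw [hB.PiR_one, one_mul]

theorem antipode_PiRbar (hH : IsWeakHopf k H Δ ε S) (g : H) :
    S (PiRbar Δ ε g) = PiL k H Δ ε g := by
  have hB := hH.toIsWeakBialgebra
  have hPiL : PiL k H Δ ε = conv Δ (S ∘ₗ PiRbar Δ ε) (PiL k H Δ ε) := by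
    rw [← hH.conv_id_antipode, ← conv_assoc hB.coassoc, hH.conv_antipode_PiRbar_id]
  calc S (PiRbar Δ ε g)
      = conv Δ S (PiL k H Δ ε) (PiRbar Δ ε g) := by rw [hH.conv_antipode_PiL]
    _ = mul' k H (rTensor H S (rTensor H (PiRbar Δ ε ∘ₗ mulRight k g) (Δ 1))) := by
        rw [hB.conv_PiL_apply, hB.rTensor_PiRbar_comp_mulRight]
    _ = PiL k H Δ ε g := by
        rw [hPiL, hB.conv_PiL_apply]
        simp only [rTensor_comp_apply]

end IsWeakHopf

section Comodule

variable {A : Type*} [Ring A] [Algebra k A] {ρ : A →ₗ[k] H ⊗[k] A}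

theorem lTensor_innerW_assoc (u : H ⊗[k] H) (w : H ⊗[k] A) :
    lTensor H (innerW k H A) (TensorProduct.assoc k H H (H ⊗[k] A) (u ⊗ₜ[k] w)) =
      lTensor H (mulLeft k w ∘ₗ (mk k H A).flip 1) u := by
  induction u using TensorProduct.induction_on with
  | zero => simp
  | add u₁ u₂ h₁ h₂ => simp_all [add_tmul]
  | tmul a b =>
    induction w using TensorProduct.induction_on <;> simp_all [innerW, tmul_add, add_mul]

namespace IsWeakComoduleAlgebra

theorem coassoc (hA : IsWeakComoduleAlgebra k H Δ ε A ρ) (a : A) :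
    TensorProduct.assoc k H H A (rTensor A Δ (ρ a)) = lTensor H ρ (ρ a) :=
  hA.1 a

theorem sliceFst_coaction (hA : IsWeakComoduleAlgebra k H Δ ε A ρ) (a : A) :
    sliceFst ε (ρ a) = a :=
  hA.2.1 a

theorem map_mul (hA : IsWeakComoduleAlgebra k H Δ ε A ρ) (a b : A) : ρ (a * b) = ρ a * ρ b :=
  hA.2.2.1 a b

theorem lTensor_coaction_coaction_one (hA : IsWeakComoduleAlgebra k H Δ ε A ρ) :
    lTensor H ρ (ρ 1) = lTensor H (mulLeft k (ρ 1) ∘ₗ (mk k H A).flip 1) (Δ 1) := by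
  rw [hA.2.2.2, lTensor_innerW_assoc]

-- `1₍₁₎ ⊗ ε(b₍₋₁₎ 1₍₂₎) b₍₀₎ = 1₍₋₁₎ ⊗ b 1₍₀₎`
theorem lTensor_sliceFst_mulLeft_coaction (hA : IsWeakComoduleAlgebra k H Δ ε A ρ) (b : A) :
    lTensor H (sliceFst ε ∘ₗ mulLeft k (ρ b) ∘ₗ (mk k H A).flip 1) (Δ 1) =
      lTensor H (mulLeft k b) (ρ 1) := by
  have hcounit : sliceFst ε ∘ₗ mulLeft k (ρ b) ∘ₗ ρ = mulLeft k b := by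
    ext x
    simp [← hA.map_mul, hA.sliceFst_coaction]
  have hunit : mulLeft k (ρ b) ∘ₗ mulLeft k (ρ 1) = mulLeft k (ρ b) := by
    rw [← mulLeft_mul, ← hA.map_mul, mul_one]
  calc lTensor H (sliceFst ε ∘ₗ mulLeft k (ρ b) ∘ₗ (mk k H A).flip 1) (Δ 1)
      = lTensor H (sliceFst ε ∘ₗ mulLeft k (ρ b)) (lTensor H ρ (ρ 1)) := by
        rw [hA.lTensor_coaction_coaction_one, ← lTensor_comp_apply, comp_assoc,
          ← comp_assoc _ (mulLeft k (ρ 1)), hunit]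
    _ = lTensor H (mulLeft k b) (ρ 1) := by rw [← lTensor_comp_apply, comp_assoc, hcounit]

theorem sliceFst_comp_coaction (hA : IsWeakComoduleAlgebra k H Δ ε A ρ)
    (hB : IsWeakBialgebra k H Δ ε) (g : H) :
    sliceFst (ε ∘ₗ mulRight k g) ∘ₗ ρ = mulRight k (sAlin k H ε A ρ g) := by
  ext b
  calc sliceFst (ε ∘ₗ mulRight k g) (ρ b)
      = sliceFst (ε ∘ₗ mulRight k (PiL k H Δ ε g)) (ρ b) := by
        rw [hB.counit_comp_mulRight_PiL]
    _ = coPi k H A ε (ρ b) (sliceFst (ε ∘ₗ mulRight k g) (Δ 1)) := by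
        rw [coPi_apply, PiL, coPi_apply]
    _ = sliceFst (ε ∘ₗ mulRight k g) (lTensor H (mulLeft k b) (ρ 1)) := by
        rw [← sliceFst_lTensor, coPi_eq_sliceFst, hA.lTensor_sliceFst_mulLeft_coaction]
    _ = b * sAlin k H ε A ρ g := by
        rw [sliceFst_lTensor, sAlin, coPi_apply]
        rfl

theorem rTensor_mulRight_PiRbar (hA : IsWeakComoduleAlgebra k H Δ ε A ρ)
    (hB : IsWeakBialgebra k H Δ ε) (g : H) (a : A) :
    rTensor A (mulRight k (PiRbar Δ ε g)) (ρ a) =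
      lTensor H (mulRight k (sAlin k H ε A ρ g)) (ρ a) := by
  rw [← hB.sliceSnd_comp_comul, ← hA.sliceFst_comp_coaction hB, rTensor_comp_apply,
    ← lTensor_sliceFst_assoc, hA.coassoc, lTensor_comp_apply]

end IsWeakComoduleAlgebra

end Comodule

end WeakBialgebra

end DK

theorem stmt12_general (k : Type*) [CommRing k] (H : Type*) [Ring H] [Algebra k H]
    (Δ : H →ₗ[k] H ⊗[k] H) (ε : H →ₗ[k] k) (S Sinv : H →ₗ[k] H)
    (A : Type*) [Ring A] [Algebra k A] (ρ : A →ₗ[k] H ⊗[k] A)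
    (hwh : DK.IsWeakHopf k H Δ ε S)
    (hinv1 : ∀ h, Sinv (S h) = h)
    (hA : DK.IsWeakComoduleAlgebra k H Δ ε A ρ) :
    (∀ (g : H) (a : A),
      (LinearMap.rTensor A (LinearMap.mulRight k (Sinv (DK.PiL k H Δ ε g)))) (ρ a) =
        (LinearMap.lTensor H (LinearMap.mulRight k (DK.sAlin k H ε A ρ g))) (ρ a)) ∧
    (∀ (g : H) (a : A),
      (Submodule.span k {x : H ⊗[k] A | ∃ (g' : H) (h : H) (a' : A),
          x = (Sinv (DK.PiL k H Δ ε g') * h) ⊗ₜ[k] a' -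
            h ⊗ₜ[k] (DK.sAlin k H ε A ρ g' * a')}).mkQ
        ((LinearMap.rTensor A (LinearMap.mulRight k (Sinv (DK.PiL k H Δ ε g)))) (ρ a)) =
      (Submodule.span k {x : H ⊗[k] A | ∃ (g' : H) (h : H) (a' : A),
          x = (Sinv (DK.PiL k H Δ ε g') * h) ⊗ₜ[k] a' -
            h ⊗ₜ[k] (DK.sAlin k H ε A ρ g' * a')}).mkQ
        ((LinearMap.lTensor H (LinearMap.mulRight k (DK.sAlin k H ε A ρ g))) (ρ a))) := by
  have hbalanced : ∀ (g : H) (a : A),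
      rTensor A (mulRight k (Sinv (DK.PiL k H Δ ε g))) (ρ a) =
        lTensor H (mulRight k (DK.sAlin k H ε A ρ g)) (ρ a) := by
    intro g a
    rw [← hwh.antipode_PiRbar, hinv1]
    exact hA.rTensor_mulRight_PiRbar hwh.toIsWeakBialgebra g a
  exact ⟨hbalanced, fun g a => by rw [hbalanced g a]⟩

/-- In the setting of the previous statement, for all `g ∈ H`, `a ∈ A`:
`a₍₋₁₎ S⁻¹(Π^L g) ⊗ a₍₀₎ = a₍₋₁₎ ⊗ a₍₀₎ s_A(Π^L g)`.  Consequently the induced coaction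
`A → H ⊗_R A` takes values in the Takeuchi product `H ×_R A` (the quotient being by the
balancing relations `S⁻¹(Π^L g) h ⊗ a = h ⊗ s_A(Π^L g) a`, with `t_H = S⁻¹|_R`). -/
theorem stmt12 (k : Type*) [CommRing k] (H : Type*) [Ring H] [Algebra k H]
    (Δ : H →ₗ[k] H ⊗[k] H) (ε : H →ₗ[k] k) (S Sinv : H →ₗ[k] H)
    (A : Type*) [Ring A] [Algebra k A] (ρ : A →ₗ[k] H ⊗[k] A)
    (hwh : DK.IsWeakHopf k H Δ ε S)
    (hinv1 : ∀ h, Sinv (S h) = h) (hinv2 : ∀ h, S (Sinv h) = h)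
    (hA : DK.IsWeakComoduleAlgebra k H Δ ε A ρ) :
    (∀ (g : H) (a : A),
      (LinearMap.rTensor A (LinearMap.mulRight k (Sinv (DK.PiL k H Δ ε g)))) (ρ a) =
        (LinearMap.lTensor H (LinearMap.mulRight k (DK.sAlin k H ε A ρ g))) (ρ a)) ∧
    (∀ (g : H) (a : A),
      (Submodule.span k {x : H ⊗[k] A | ∃ (g' : H) (h : H) (a' : A),
          x = (Sinv (DK.PiL k H Δ ε g') * h) ⊗ₜ[k] a' -
            h ⊗ₜ[k] (DK.sAlin k H ε A ρ g' * a')}).mkQ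
        ((LinearMap.rTensor A (LinearMap.mulRight k (Sinv (DK.PiL k H Δ ε g)))) (ρ a)) =
      (Submodule.span k {x : H ⊗[k] A | ∃ (g' : H) (h : H) (a' : A),
          x = (Sinv (DK.PiL k H Δ ε g') * h) ⊗ₜ[k] a' -
            h ⊗ₜ[k] (DK.sAlin k H ε A ρ g' * a')}).mkQ
        ((LinearMap.lTensor H (LinearMap.mulRight k (DK.sAlin k H ε A ρ g))) (ρ a))) :=
  stmt12_general k H Δ ε S Sinv A ρ hwh hinv1 hA
end
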